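/- Let X be a Baire topological vector space and f : X → ℝ quasiconvex whose set of discontinuity points is meagre; set m := T-ess inf_X f. Then for every α ∈ ℝ with α ≠ m, the level set f⁻¹(α) is either nowhere dense or has nonempty interior. -/

import Mathlib

open Set Topology

/-- Topological essential infimum of `f` on `U`. -/
noncomputable def tessInf {X : Type*} [TopologicalSpace X] (f : X → ℝ) (U : Set X) : EReal :=
  sSup ((fun α : ℝ => (α : EReal)) '' {α : ℝ | IsMeagre {x ∈ U | f x < α}})

lemma open_nonmeagre {X : Type*} [TopologicalSpace X] [BaireSpace X] {U : Set X}
    (hU : IsOpen U) (hne : U.Nonempty) : ¬ IsMeagre U := by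
  intro h
  have hdense : Dense Uᶜ := dense_of_mem_residual h
  obtain ⟨y, hyU, hyc⟩ := hdense.inter_open_nonempty U hU hne
  exact hyc hyU

lemma meagre_union {X : Type*} [TopologicalSpace X] {s t : Set X}
    (hs : IsMeagre s) (ht : IsMeagre t) : IsMeagre (s ∪ t) := by
  rw [IsMeagre, compl_union]
  exact Filter.inter_mem hs ht

lemma tendsto_aux {X : Type*} [AddCommGroup X] [Module ℝ X] [TopologicalSpace X]
    [IsTopologicalAddGroup X] [ContinuousSMul ℝ X] (x c : X) :
    Filter.Tendsto (fun n : ℕ => x + (1 / (n + 1) : ℝ) • (c - x)) Filter.atTop (𝓝 x) := by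
  have hco : Continuous (fun t : ℝ => x + t • (c - x)) := by continuity
  have := (hco.tendsto 0).comp tendsto_one_div_add_atTop_nhds_zero_nat
  simpa [Function.comp_def] using this

lemma mem_Ioc_aux (n : ℕ) : (1 / (n + 1) : ℝ) ∈ Set.Ioc (0:ℝ) 1 := by
  constructor
  · positivity
  · rw [div_le_one (by positivity)]
    linarith [Nat.cast_nonneg (α := ℝ) n]

theorem stmt17 {X : Type*} [AddCommGroup X] [Module ℝ X] [TopologicalSpace X]
    [IsTopologicalAddGroup X] [ContinuousSMul ℝ X] [BaireSpace X]
    (f : X → ℝ) (hf : ∀ α : ℝ, Convex ℝ {x | f x < α})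
    (hd : IsMeagre {x | ¬ ContinuousAt f x})
    (m : EReal) (hm : m = tessInf f Set.univ)
    (α : ℝ) (hα : (α : EReal) ≠ m) :
    IsNowhereDense (f ⁻¹' {α}) ∨ (interior (f ⁻¹' {α})).Nonempty := by
  by_cases hnd : IsNowhereDense (f ⁻¹' {α})
  · exact Or.inl hnd
  set S := f ⁻¹' {α} with hSdef
  have hSmem : ∀ x, x ∈ S ↔ f x = α := fun x => Iff.rfl
  have hUne : (interior (closure S)).Nonempty := by
    rw [IsNowhereDense] at hnd
    exact nonempty_iff_ne_empty.mpr hnd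
  set U := interior (closure S) with hUdef
  have hUopen : IsOpen U := isOpen_interior
  have hUnm : ¬ IsMeagre U := open_nonmeagre hUopen hUne
  have hm' : m = sSup ((fun α : ℝ => (α : EReal)) '' {α : ℝ | IsMeagre {x | f x < α}}) := by
    rw [hm, tessInf]
    congr 2
    simp only [Set.sep_univ]
  rcases lt_trichotomy ((α : EReal)) m with hlt | heq | hgt
  · exfalso
    rw [hm'] at hlt
    obtain ⟨b, hb, hab⟩ := lt_sSup_iff.mp hlt
    obtain ⟨β, hβm, rfl⟩ := hb
    have hab' : (α : EReal) < (β : EReal) := hab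
    have hαβ : α < β := by exact_mod_cast hab'
    have hM : IsMeagre ({x | f x < β} ∪ {x | ¬ ContinuousAt f x}) := meagre_union hβm hd
    have hsub : ¬ U ⊆ ({x | f x < β} ∪ {x | ¬ ContinuousAt f x}) := fun h => hUnm (hM.mono h)
    obtain ⟨x, hxU, hxM⟩ := not_subset.mp hsub
    rw [mem_union] at hxM
    push_neg at hxM
    obtain ⟨hxf, hxc⟩ := hxM
    have hcont : ContinuousAt f x := not_not.mp hxc
    have hfx : α < f x := lt_of_lt_of_le hαβ (not_lt.mp hxf)
    have hnb : f ⁻¹' (Set.Ioi α) ∈ 𝓝 x := hcont (Ioi_mem_nhds hfx)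
    have hxcl : x ∈ closure S := interior_subset hxU
    obtain ⟨y, hy1, hy2⟩ := mem_closure_iff_nhds.mp hxcl _ hnb
    have hy3 : f y = α := hy2
    have hy4 : α < f y := hy1
    rw [hy3] at hy4
    exact lt_irrefl α hy4
  · exact absurd heq hα
  · right
    set C := {x | f x < α} with hCdef
    have hCconv := hf α
    have hCnm : ¬ IsMeagre C := by
      intro h
      have hle : (α : EReal) ≤ m := by
        rw [hm']
        exact le_sSup ⟨α, h, rfl⟩
      exact absurd hle (not_le.mpr hgt)
    have hCG : ∀ x ∈ C, ContinuousAt f x → x ∈ interior C := by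
      intro x hx hcont
      rw [mem_interior_iff_mem_nhds]
      exact hcont (Iio_mem_nhds hx)
    have hintC : (interior C).Nonempty := by
      rw [nonempty_iff_ne_empty]
      intro hemp
      apply hCnm
      apply hd.mono
      intro x hx
      by_contra hxc
      have := hCG x hx (not_not.mp hxc)
      rw [hemp] at this
      exact this
    obtain ⟨c, hc⟩ := hintC
    set D := {x | f x ≤ α} with hDdef
    have hDconv : Convex ℝ D := by
      intro x hx y hy a b ha hb hab
      by_contra hcon
      have hcon' : α < f (a • x + b • y) := not_le.mp hcon
      have hx' : x ∈ {z | f z < f (a • x + b • y)} := lt_of_le_of_lt hx hcon'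
      have hy' : y ∈ {z | f z < f (a • x + b • y)} := lt_of_le_of_lt hy hcon'
      have habs : f (a • x + b • y) < f (a • x + b • y) := hf (f (a • x + b • y)) hx' hy' ha hb hab
      exact lt_irrefl _ habs
    have hCD : C ⊆ D := fun x hx => show f x ≤ α from le_of_lt hx
    have hcD : c ∈ interior D := interior_mono hCD hc
    have hUS : ∀ x ∈ U, ContinuousAt f x → x ∈ S := by
      intro x hxU hcont
      have hxcl : x ∈ closure S := interior_subset hxU
      rcases lt_trichotomy (f x) α with h | h | h
      · exfalso
        have hnb : f ⁻¹' (Set.Iio α) ∈ 𝓝 x := hcont (Iio_mem_nhds h)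
        obtain ⟨y, hy1, hy2⟩ := mem_closure_iff_nhds.mp hxcl _ hnb
        have hy3 : f y = α := hy2
        have hy4 : f y < α := hy1
        rw [hy3] at hy4
        exact lt_irrefl α hy4
      · exact h
      · exfalso
        have hnb : f ⁻¹' (Set.Ioi α) ∈ 𝓝 x := hcont (Ioi_mem_nhds h)
        obtain ⟨y, hy1, hy2⟩ := mem_closure_iff_nhds.mp hxcl _ hnb
        have hy3 : f y = α := hy2
        have hy4 : α < f y := hy1
        rw [hy3] at hy4
        exact lt_irrefl α hy4
    by_cases hsub : interior D ⊆ closure C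
    · exfalso
      have hDclI : D ⊆ closure (interior D) := by
        intro x hx
        apply mem_closure_of_tendsto (tendsto_aux x c)
        apply Filter.Eventually.of_forall
        intro n
        exact hDconv.add_smul_sub_mem_interior hx hcD (mem_Ioc_aux n)
      have hclSC : closure S ⊆ closure C := by
        have h1 : D ⊆ closure C := by
          intro x hx
          have := hDclI hx
          have h2 : closure (interior D) ⊆ closure C := by
            rw [← closure_closure (s := C)]
            exact closure_mono hsub
          exact h2 this
        have h2 : S ⊆ D := fun x hx => le_of_eq hx
        exact (closure_mono h2).trans (closure_minimal h1 isClosed_closure)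
      obtain ⟨x₀, hx₀⟩ := hUne
      have hx₀cl : x₀ ∈ closure C := hclSC (interior_subset hx₀)
      have hev : ∀ᶠ n : ℕ in Filter.atTop, (x₀ + (1/((n:ℝ)+1):ℝ) • (c - x₀)) ∈ U :=
        (tendsto_aux x₀ c) (hUopen.mem_nhds hx₀)
      obtain ⟨n, hn⟩ := hev.exists
      have hyint : x₀ + (1/((n:ℝ)+1):ℝ) • (c - x₀) ∈ interior C :=
        hCconv.add_smul_sub_mem_interior' hx₀cl hc (mem_Ioc_aux n)
      have hVopen : IsOpen (U ∩ interior C) := hUopen.inter isOpen_interior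
      have hVsub : U ∩ interior C ⊆ {x | ¬ ContinuousAt f x} := by
        rintro z ⟨hzU, hzC⟩
        intro hcont
        have hzS : f z = α := hUS z hzU hcont
        have hzlt : z ∈ C := interior_subset hzC
        have hzlt' : f z < α := hzlt
        rw [hzS] at hzlt'
        exact lt_irrefl α hzlt'
      exact open_nonmeagre hVopen ⟨_, hn, hyint⟩ (hd.mono hVsub)
    · obtain ⟨z, hzD, hzC⟩ := not_subset.mp hsub
      have hWsub : interior D \ closure C ⊆ S := by
        rintro w ⟨hw1, hw2⟩
        have hw1' : w ∈ D := interior_subset hw1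
        have h1 : f w ≤ α := hw1'
        have h2 : ¬ f w < α := fun h => hw2 (subset_closure h)
        exact le_antisymm h1 (not_lt.mp h2)
      have hWopen : IsOpen (interior D \ closure C) := isOpen_interior.sdiff isClosed_closure
      exact ⟨z, interior_maximal hWsub hWopen ⟨hzD, hzC⟩⟩
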